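/- With ν as the full sum and ν_N(x) = ∑_{q=2}^N ∑_{1≤p<q, gcd(p,q)=1} (q/(2^q-1)) 1_{J_{p/q}}(x) the N-th partial sum, for every integer N ≥ 2 and every x ∈ [-1/2, 1/2] we have 0 ≤ ν(x) - ν_N(x) < 4(N+2)/(2^{N+1} - 1). -/

import Mathlib

/-!
Writing `t_{p/q} = ∑ dᵢ 2⁻ⁱ`, each digit `dᵢ = ⌊(i+1)p/q⌋ - ⌊ip/q⌋` is `0` or `1` when `p < q`, so
`0 ≤ t_{p/q} < 1`. Hence `x ∈ J_{p/q}` forces `q(x + 1/2) - 1 ≤ p < q(x + 1/2) + 1`, which at most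
two integers `p` satisfy; so the `q`-th term of `ν` is at most `2q/(2^q - 1)`.
Writing `D = 2^{N+1} - 1`, one has `2^i D ≤ 2^{i+N+1} - 1` (strictly for `i ≥ 1`), so the tail
of `ν` past `N` is bounded by `∑ᵢ 2(i+N+1)/(2^i D) = 4(N+2)/D`, strictly.
-/

noncomputable def tpq (p q : ℕ) : ℝ :=
  ∑ i ∈ Finset.Icc 1 q,
    ((⌊(((i + 1) * p : ℕ) : ℝ) / q⌋ - ⌊((i * p : ℕ) : ℝ) / q⌋ : ℤ) : ℝ) / 2 ^ i

noncomputable def Jpq (p q : ℕ) : Set ℝ :=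
  Set.Icc (((p : ℝ) - tpq p q) / q - 1 / 2) (((p : ℝ) - tpq p q + 1) / q - 1 / 2)

noncomputable def nuTerm (q : ℕ) (x : ℝ) : ℝ :=
  ∑ p ∈ (Finset.Ioo 0 q).filter (fun p => Nat.Coprime p q),
    (q : ℝ) / (2 ^ q - 1) * (Jpq p q).indicator 1 x

noncomputable def nu (x : ℝ) : ℝ := ∑' q : ℕ, nuTerm q x

noncomputable def nuN (N : ℕ) (x : ℝ) : ℝ := ∑ q ∈ Finset.Icc 2 N, nuTerm q x

lemma Int.floor_add_sub_floor_le_one {a b : ℝ} (hb : b < 1) : ⌊a + b⌋ - ⌊a⌋ ≤ 1 := by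
  have : ⌊a + b⌋ < ⌊a⌋ + 2 := Int.floor_lt.mpr (by push_cast; linarith [Int.lt_floor_add_one a])
  omega

lemma sum_Icc_one_div_two_pow (n : ℕ) : ∑ i ∈ Finset.Icc 1 n, (1 : ℝ) / 2 ^ i = 1 - 1 / 2 ^ n := by
  induction n with
  | zero => simp
  | succ n ih =>
    rw [Finset.sum_Icc_succ_top (by omega), ih]
    ring

lemma tpq_digit_mem_Icc (p q i : ℕ) (hp : p < q) :
    ⌊(((i + 1) * p : ℕ) : ℝ) / q⌋ - ⌊((i * p : ℕ) : ℝ) / q⌋ ∈ Set.Icc (0 : ℤ) 1 := by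
  have hshift : (((i + 1) * p : ℕ) : ℝ) / q = ((i * p : ℕ) : ℝ) / q + (p : ℝ) / q := by
    push_cast; ring
  rw [hshift]
  constructor
  · exact sub_nonneg.mpr (Int.floor_le_floor (by simp only [le_add_iff_nonneg_right]; positivity))
  · refine Int.floor_add_sub_floor_le_one ?_
    rw [div_lt_one (by exact_mod_cast p.zero_le.trans_lt hp)]
    exact_mod_cast hp

lemma tpq_nonneg (p q : ℕ) (hp : p < q) : 0 ≤ tpq p q :=
  Finset.sum_nonneg fun i _ => div_nonneg (by exact_mod_cast (tpq_digit_mem_Icc p q i hp).1)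
    (by positivity)

lemma tpq_lt_one (p q : ℕ) (hp : p < q) : tpq p q < 1 :=
  calc tpq p q ≤ ∑ i ∈ Finset.Icc 1 q, (1 : ℝ) / 2 ^ i :=
        Finset.sum_le_sum fun i _ => by
          gcongr
          exact_mod_cast (tpq_digit_mem_Icc p q i hp).2
    _ < 1 := by rw [sum_Icc_one_div_two_pow]; exact sub_lt_self 1 (by positivity)

lemma mem_Ico_of_mem_Jpq {p q : ℕ} {x : ℝ} (hp : p < q) (hx : x ∈ Jpq p q) :
    (p : ℝ) ∈ Set.Ico (q * (x + 1 / 2) - 1) (q * (x + 1 / 2) + 1) := by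
  have hq : (0 : ℝ) < q := by exact_mod_cast p.zero_le.trans_lt hp
  have ht0 := tpq_nonneg p q hp
  have ht1 := tpq_lt_one p q hp
  obtain ⟨hlo, hhi⟩ := hx
  have hlo' : (p : ℝ) - tpq p q ≤ q * (x + 1 / 2) := by
    rw [← div_le_iff₀' hq]; linarith
  have hhi' : q * (x + 1 / 2) ≤ (p : ℝ) - tpq p q + 1 := by
    rw [← le_div_iff₀' hq]; linarith
  constructor <;> linarith

lemma card_le_two_of_forall_mem_Ico {s : Finset ℕ} {y : ℝ}
    (hs : ∀ p ∈ s, (p : ℝ) ∈ Set.Ico (y - 1) (y + 1)) : s.card ≤ 2 := by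
  have hsub : s ⊆ Finset.Ico ⌈y - 1⌉₊ (⌈y - 1⌉₊ + 2) := by
    intro p hp
    obtain ⟨hlo, hhi⟩ := hs p hp
    have hceil := Nat.le_ceil (y - 1)
    rw [Finset.mem_Ico]
    constructor
    · exact Nat.ceil_le.mpr hlo
    · exact_mod_cast (show (p : ℝ) < ⌈y - 1⌉₊ + 2 by linarith)
  simpa using Finset.card_le_card hsub

open Classical in
lemma nuTerm_eq_mul_card (q : ℕ) (x : ℝ) :
    nuTerm q x = (q : ℝ) / (2 ^ q - 1) *
      (((Finset.Ioo 0 q).filter (fun p => Nat.Coprime p q)).filter (fun p => x ∈ Jpq p q)).card := by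
  rw [nuTerm, ← Finset.mul_sum, Finset.card_filter, Nat.cast_sum]
  congr 1
  refine Finset.sum_congr rfl fun p _ => ?_
  by_cases h : x ∈ Jpq p q <;> simp [h]

lemma two_pow_sub_one_nonneg (n : ℕ) : (0 : ℝ) ≤ 2 ^ n - 1 :=
  sub_nonneg.mpr (one_le_pow₀ (by norm_num))

lemma two_pow_sub_one_pos {n : ℕ} (hn : n ≠ 0) : (0 : ℝ) < 2 ^ n - 1 :=
  sub_pos.mpr (one_lt_pow₀ (by norm_num) hn)

noncomputable def nuTermBound (q : ℕ) : ℝ := 2 * q / (2 ^ q - 1)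

lemma nuTermBound_nonneg (q : ℕ) : 0 ≤ nuTermBound q :=
  div_nonneg (by positivity) (two_pow_sub_one_nonneg q)

lemma nuTerm_nonneg (q : ℕ) (x : ℝ) : 0 ≤ nuTerm q x := by
  classical
  rw [nuTerm_eq_mul_card]
  exact mul_nonneg (div_nonneg (by positivity) (two_pow_sub_one_nonneg q)) (Nat.cast_nonneg _)

lemma nuTerm_le_nuTermBound (q : ℕ) (x : ℝ) : nuTerm q x ≤ nuTermBound q := by
  classical
  have hcard : (((Finset.Ioo 0 q).filter (fun p => Nat.Coprime p q)).filter
      (fun p => x ∈ Jpq p q)).card ≤ 2 := by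
    refine card_le_two_of_forall_mem_Ico (y := q * (x + 1 / 2)) fun p hp => ?_
    simp only [Finset.mem_filter, Finset.mem_Ioo] at hp
    exact mem_Ico_of_mem_Jpq hp.1.1.2 hp.2
  rw [nuTerm_eq_mul_card, nuTermBound, mul_comm, mul_div_assoc]
  gcongr
  · exact div_nonneg (Nat.cast_nonneg q) (two_pow_sub_one_nonneg q)
  · exact_mod_cast hcard

lemma nuTerm_eq_zero_of_le_one {q : ℕ} (hq : q ≤ 1) (x : ℝ) : nuTerm q x = 0 := by
  have h : Finset.Ioo 0 q = ∅ := by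
    ext p
    simp only [Finset.mem_Ioo, Finset.notMem_empty, iff_false]
    omega
  simp [nuTerm, h]

lemma two_pow_add_sub_one (N i : ℕ) :
    (2 : ℝ) ^ (i + (N + 1)) - 1 = 2 ^ i * (2 ^ (N + 1) - 1) + (2 ^ i - 1) := by
  rw [pow_add]; ring

lemma nuTermBound_add_le (N i : ℕ) :
    nuTermBound (i + (N + 1)) ≤ 2 * (i + N + 1) / (2 ^ i * (2 ^ (N + 1) - 1)) := by
  have hD := two_pow_sub_one_pos N.succ_ne_zero
  rw [nuTermBound, two_pow_add_sub_one]
  push_cast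
  rw [← add_assoc]
  gcongr
  linarith [one_le_pow₀ (one_le_two (α := ℝ)) (n := i)]

lemma nuTermBound_add_lt (N : ℕ) {i : ℕ} (hi : i ≠ 0) :
    nuTermBound (i + (N + 1)) < 2 * (i + N + 1) / (2 ^ i * (2 ^ (N + 1) - 1)) := by
  have hD := two_pow_sub_one_pos N.succ_ne_zero
  rw [nuTermBound, two_pow_add_sub_one]
  push_cast
  rw [← add_assoc]
  gcongr
  linarith [one_lt_pow₀ (one_lt_two (α := ℝ)) hi]

lemma hasSum_nuTermBound_majorant (N : ℕ) :
    HasSum (fun i : ℕ => 2 * (i + N + 1) / (2 ^ i * (2 ^ (N + 1) - 1) : ℝ))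
      (4 * (N + 2) / (2 ^ (N + 1) - 1)) := by
  have hr : ‖(1 / 2 : ℝ)‖ < 1 := by norm_num
  have h := (((hasSum_coe_mul_geometric_of_norm_lt_one hr).mul_left 2).add
    ((hasSum_geometric_of_lt_one (by norm_num : (0 : ℝ) ≤ 1 / 2) (by norm_num)).mul_left
      (2 * (N + 1 : ℝ)))).div_const (2 ^ (N + 1) - 1)
  convert h using 1
  · rfl
  · funext i
    rw [div_pow, one_pow, mul_comm (2 ^ i : ℝ), ← div_div]
    ring
  · norm_num
    ring

lemma summable_nuTermBound : Summable nuTermBound :=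
  (summable_nat_add_iff 1).mp <| (hasSum_nuTermBound_majorant 0).summable.of_nonneg_of_le
    (fun _ => nuTermBound_nonneg _) (nuTermBound_add_le 0)

lemma tsum_nuTermBound_add_lt (N : ℕ) :
    ∑' i, nuTermBound (i + (N + 1)) < 4 * (N + 2) / (2 ^ (N + 1) - 1) :=
  hasSum_lt (i := 1) (nuTermBound_add_le N) (nuTermBound_add_lt N one_ne_zero)
    ((summable_nat_add_iff (N + 1)).mpr summable_nuTermBound).hasSum
    (hasSum_nuTermBound_majorant N)

lemma summable_nuTerm (x : ℝ) : Summable (nuTerm · x) :=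
  summable_nuTermBound.of_nonneg_of_le (nuTerm_nonneg · x) (nuTerm_le_nuTermBound · x)

lemma nu_sub_nuN (N : ℕ) (x : ℝ) : nu x - nuN N x = ∑' i, nuTerm (i + (N + 1)) x := by
  have hN : nuN N x = ∑ q ∈ Finset.range (N + 1), nuTerm q x := by
    refine Finset.sum_subset (fun q hq => ?_) (fun q hq hqN => ?_)
    · simp only [Finset.mem_Icc] at hq
      simp only [Finset.mem_range]
      omega
    · simp only [Finset.mem_range] at hq
      simp only [Finset.mem_Icc, not_and_or, not_le] at hqN
      exact nuTerm_eq_zero_of_le_one (by omega) x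
  rw [nu, ← (summable_nuTerm x).sum_add_tsum_nat_add (N + 1), hN, add_sub_cancel_left]

theorem stmt_17 (N : ℕ) (x : ℝ) :
    0 ≤ nu x - nuN N x ∧ nu x - nuN N x < 4 * (N + 2) / (2 ^ (N + 1) - 1) := by
  rw [nu_sub_nuN]
  have hs : Summable (nuTerm · x) := summable_nuTerm x
  refine ⟨tsum_nonneg fun i => nuTerm_nonneg _ x, ?_⟩
  calc ∑' i, nuTerm (i + (N + 1)) x ≤ ∑' i, nuTermBound (i + (N + 1)) :=
        ((summable_nat_add_iff (N + 1)).mpr hs).tsum_le_tsum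
          (fun i => nuTerm_le_nuTermBound _ x)
          ((summable_nat_add_iff (N + 1)).mpr summable_nuTermBound)
    _ < 4 * (N + 2) / (2 ^ (N + 1) - 1) := tsum_nuTermBound_add_lt N
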